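/- arXiv:1307.2704 — 3 statements merged into one kernel-verified Lean document; each statement's English description precedes it below -/
import Mathlib

section
/- Let C be a finite covering of a finite set and B ⊆ C. Then B = reduct(C) if and only if C ⊆ I(B) and for every K ∈ B, C ⊄ I(B − {K}). -/
open Finset

variable {α : Type*} [Fintype α] [DecidableEq α]

/-- `C` is a covering of the (finite) universe: no empty block, blocks cover everything. -/
def IsCovering (C : Finset (Finset α)) : Prop :=
  ∅ ∉ C ∧ C.sup id = (Finset.univ : Finset α)

/-- Neighborhood of `x`: intersection of all blocks of `C` containing `x`. -/
def Nbhd (C : Finset (Finset α)) (x : α) : Finset α :=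
  (C.filter fun K => x ∈ K).inf id

/-- Repeat degree of `X` w.r.t. `C`. -/
def deg (C : Finset (Finset α)) (X : Finset α) : ℕ :=
  (C.filter fun K => X ⊆ K).card

/-- `I(F)`: all unions of subfamilies of `F`. -/
def IFam (F : Finset (Finset α)) : Finset (Finset α) :=
  F.powerset.image fun D => D.sup id

/-- Reducible elements of `F`. -/
def SFam (F : Finset (Finset α)) : Finset (Finset α) :=
  F.filter fun K => K ∈ IFam (F.erase K)

/-- Reduct of `C`. -/
def reduct (C : Finset (Finset α)) : Finset (Finset α) :=
  C \ SFam C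

/-- Covering of neighborhoods induced by `C`. -/
def Cov (C : Finset (Finset α)) : Finset (Finset α) :=
  Finset.univ.image (Nbhd C)

/-- `Γ(x)`. -/
def Gamma (C : Finset (Finset α)) (x : α) : Finset (Finset α) :=
  C.filter fun K => x ∈ K ∧ ∀ y ∈ K, deg C {x, y} = deg C {x}

/-- `P_C(x)`. -/
def PMap (C : Finset (Finset α)) (x : α) : Finset α :=
  Finset.univ.filter fun y => deg C {x, y} = deg C {x}

/-- Relation induced by a covering. -/
def RelOf (C : Finset (Finset α)) : Set (α × α) :=
  {p | p.2 ∈ Nbhd C p.1}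

lemma mem_IFam {F : Finset (Finset α)} {X : Finset α} :
    X ∈ IFam F ↔ ∃ D ⊆ F, D.sup id = X := by
  simp [IFam, Finset.mem_image, Finset.mem_powerset]

lemma self_mem_IFam {F : Finset (Finset α)} {K : Finset α} (h : K ∈ F) : K ∈ IFam F :=
  mem_IFam.2 ⟨{K}, by simpa using h, by simp⟩

lemma IFam_mono {F G : Finset (Finset α)} (h : F ⊆ G) : IFam F ⊆ IFam G := by
  intro X hX
  obtain ⟨D, hD, rfl⟩ := mem_IFam.1 hX
  exact mem_IFam.2 ⟨D, hD.trans h, rfl⟩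

lemma sup_mem_IFam {F D : Finset (Finset α)} (h : ∀ L ∈ D, L ∈ IFam F) :
    D.sup id ∈ IFam F := by
  induction D using Finset.induction with
  | empty => exact mem_IFam.2 ⟨∅, by simp, by simp⟩
  | @insert a s ha ih =>
    rw [Finset.sup_insert]
    obtain ⟨D1, hD1, h1⟩ := mem_IFam.1 (h a (Finset.mem_insert_self a s))
    obtain ⟨D2, hD2, h2⟩ := mem_IFam.1 (ih fun L hL => h L (Finset.mem_insert_of_mem hL))
    refine mem_IFam.2 ⟨D1 ∪ D2, Finset.union_subset hD1 hD2, ?_⟩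
    rw [Finset.sup_union, h1, h2]
    rfl

lemma IFam_absorb {F G : Finset (Finset α)} (h : F ⊆ IFam G) : IFam F ⊆ IFam G := by
  intro X hX
  obtain ⟨D, hD, rfl⟩ := mem_IFam.1 hX
  exact sup_mem_IFam fun L hL => h (hD hL)

lemma subset_IFam_reduct (C : Finset (Finset α)) : C ⊆ IFam (reduct C) := by
  intro K hK
  have main : ∀ n (K : Finset α), K ∈ C → K.card = n → K ∈ IFam (reduct C) := by
    intro n
    induction n using Nat.strong_induction_on with
    | _ n ih =>
      intro K hK hcard
      by_cases hS : K ∈ SFam C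
      · have hK' : K ∈ IFam (C.erase K) := (Finset.mem_filter.1 hS).2
        obtain ⟨D, hD, hsup⟩ := mem_IFam.1 hK'
        rw [← hsup]
        refine sup_mem_IFam fun L hL => ?_
        have hLC := hD hL
        have hLK : L ≠ K := Finset.ne_of_mem_erase hLC
        have hLsub : L ⊆ K := by
          rw [← hsup]
          exact Finset.le_sup (f := id) hL
        have : L.card < n := by
          rw [← hcard]
          exact Finset.card_lt_card (hLsub.ssubset_of_ne hLK)
        exact ih L.card this L (Finset.mem_of_mem_erase hLC) rfl
      · exact self_mem_IFam (Finset.mem_sdiff.2 ⟨hK, hS⟩)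
  exact main K.card K hK rfl

theorem stmt7 (C : Finset (Finset α)) (hC : IsCovering C) (B : Finset (Finset α))
    (hB : B ⊆ C) :
    B = reduct C ↔ C ⊆ IFam B ∧ ∀ K ∈ B, ¬ C ⊆ IFam (B.erase K) := by
  constructor
  · rintro rfl
    refine ⟨subset_IFam_reduct C, ?_⟩
    intro K hK hsub
    have hKC : K ∈ C := (Finset.mem_sdiff.1 hK).1
    have h1 : K ∈ IFam ((reduct C).erase K) := hsub hKC
    have h2 : (reduct C).erase K ⊆ C.erase K :=
      Finset.erase_subset_erase K (Finset.sdiff_subset)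
    have : K ∈ SFam C := Finset.mem_filter.2 ⟨hKC, IFam_mono h2 h1⟩
    exact (Finset.mem_sdiff.1 hK).2 this
  · rintro ⟨h1, h2⟩
    apply Finset.Subset.antisymm
    · -- B ⊆ reduct C
      intro K hK
      refine Finset.mem_sdiff.2 ⟨hB hK, ?_⟩
      intro hS
      apply h2 K hK
      -- show K ∈ IFam (B.erase K)
      have hK' : K ∈ IFam (C.erase K) := (Finset.mem_filter.1 hS).2
      obtain ⟨D, hD, hsup⟩ := mem_IFam.1 hK'
      have hKmem : K ∈ IFam (B.erase K) := by
        rw [← hsup]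
        refine sup_mem_IFam fun L hL => ?_
        have hLC := hD hL
        have hLK : L ≠ K := Finset.ne_of_mem_erase hLC
        have hLsub : L ⊆ K := by
          rw [← hsup]
          exact Finset.le_sup (f := id) hL
        obtain ⟨E, hE, hEsup⟩ := mem_IFam.1 (h1 (Finset.mem_of_mem_erase hLC))
        refine mem_IFam.2 ⟨E, ?_, hEsup⟩
        intro M hM
        refine Finset.mem_erase.2 ⟨?_, hE hM⟩
        intro hMK
        have hML : M ⊆ L := by
          rw [← hEsup]
          exact Finset.le_sup (f := id) hM
        exact hLK (Finset.Subset.antisymm hLsub (by rw [← hsup, ← hMK]; exact hML))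
      -- now C ⊆ IFam (B.erase K)
      have hBsub : B ⊆ IFam (B.erase K) := by
        intro M hM
        by_cases hMK : M = K
        · subst hMK; exact hKmem
        · exact self_mem_IFam (Finset.mem_erase.2 ⟨hMK, hM⟩)
      exact fun L hL => IFam_absorb hBsub (h1 hL)
    · -- reduct C ⊆ B
      intro K hK
      by_contra hKB
      have hKC : K ∈ C := (Finset.mem_sdiff.1 hK).1
      have hBsub : B ⊆ C.erase K := by
        intro M hM
        exact Finset.mem_erase.2 ⟨fun h => hKB (h ▸ hM), hB hM⟩
      have : K ∈ SFam C :=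
        Finset.mem_filter.2 ⟨hKC, IFam_mono hBsub (h1 hKC)⟩
      exact (Finset.mem_sdiff.1 hK).2 this
end

section
/- For a covering C of a finite set U and x ∈ U, the neighborhood N(x) belongs to C if and only if Γ(x) is nonempty. -/
open Finset

variable {α : Type*} [Fintype α] [DecidableEq α]

lemma mem_Nbhd_iff (C : Finset (Finset α)) (x y : α) :
    y ∈ Nbhd C x ↔ ∀ K ∈ C, x ∈ K → y ∈ K := by
  simp [Nbhd, Finset.mem_inf, Finset.mem_filter]

lemma deg_eq_iff (C : Finset (Finset α)) (x y : α) :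
    deg C {x, y} = deg C {x} ↔ ∀ K ∈ C, x ∈ K → y ∈ K := by
  have hsub : C.filter (fun K => ({x, y} : Finset α) ⊆ K) ⊆
      C.filter (fun K => ({x} : Finset α) ⊆ K) := by
    intro K hK
    simp only [Finset.mem_filter, Finset.insert_subset_iff,
      Finset.singleton_subset_iff] at hK ⊢
    exact ⟨hK.1, hK.2.1⟩
  constructor
  · intro h K hK hxK
    have heq := Finset.eq_of_subset_of_card_le hsub (le_of_eq h.symm)
    have : K ∈ C.filter (fun K => ({x, y} : Finset α) ⊆ K) := by
      rw [heq]
      simp [Finset.mem_filter, hK, hxK]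
    simp only [Finset.mem_filter, Finset.insert_subset_iff,
      Finset.singleton_subset_iff] at this
    exact this.2.2
  · intro h
    unfold deg
    congr 1
    apply Finset.filter_congr
    intro K hK
    simp only [Finset.insert_subset_iff, Finset.singleton_subset_iff]
    constructor
    · rintro ⟨hx, _⟩; exact hx
    · intro hx; exact ⟨hx, h K hK hx⟩

theorem stmt11 (C : Finset (Finset α)) (hC : IsCovering C) (x : α) :
    Nbhd C x ∈ C ↔ (Gamma C x).Nonempty := by
  constructor
  · intro h
    refine ⟨Nbhd C x, ?_⟩
    simp only [Gamma, Finset.mem_filter]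
    refine ⟨h, ?_, ?_⟩
    · rw [mem_Nbhd_iff]; intro K _ hx; exact hx
    · intro y hy
      rw [deg_eq_iff]
      exact (mem_Nbhd_iff C x y).1 hy
  · rintro ⟨K, hK⟩
    simp only [Gamma, Finset.mem_filter] at hK
    obtain ⟨hKC, hxK, hdeg⟩ := hK
    have : Nbhd C x = K := by
      apply Finset.Subset.antisymm
      · intro y hy
        rw [mem_Nbhd_iff] at hy
        exact hy K hKC hxK
      · intro y hy
        rw [mem_Nbhd_iff]
        exact (deg_eq_iff C x y).1 (hdeg y hy)
    rw [this]; exact hKC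
end

section
/- Let C₁ and C₂ be coverings of the same finite set U. Then R(C₁) = R(C₂) if and only if Cov(C₁) = Cov(C₂), where R(C) = {(x,y) : x ∈ U, y ∈ N_C(x)}. -/
open Finset

variable {α : Type*} [Fintype α] [DecidableEq α]

lemma mem_nbhd_of_inf {C : Finset (Finset α)} {x y : α} :
    y ∈ Nbhd C x ↔ ∀ K ∈ C, x ∈ K → y ∈ K := by
  simp [Nbhd, Finset.mem_inf]

lemma mem_nbhd_self (C : Finset (Finset α)) (x : α) : x ∈ Nbhd C x := by
  simp [mem_nbhd_of_inf]

lemma nbhd_mono (C : Finset (Finset α)) {x y : α} (h : x ∈ Nbhd C y) :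
    Nbhd C x ⊆ Nbhd C y := by
  intro z hz
  rw [mem_nbhd_of_inf] at *
  exact fun K hK hyK => hz K hK (h K hK hyK)

lemma nbhd_eq_inf_cov (C : Finset (Finset α)) (x : α) :
    Nbhd C x = ((Cov C).filter fun A => x ∈ A).inf id := by
  apply le_antisymm
  · apply Finset.le_inf
    intro A hA
    simp only [Finset.mem_filter, Cov, Finset.mem_image] at hA
    obtain ⟨⟨y, -, rfl⟩, hx⟩ := hA
    exact nbhd_mono C hx
  · apply Finset.inf_le
    simp only [Finset.mem_filter, Cov, Finset.mem_image]
    exact ⟨⟨x, Finset.mem_univ x, rfl⟩, mem_nbhd_self C x⟩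

theorem stmt16 (C₁ C₂ : Finset (Finset α)) (h1 : IsCovering C₁) (h2 : IsCovering C₂) :
    RelOf C₁ = RelOf C₂ ↔ Cov C₁ = Cov C₂ := by
  constructor
  · intro h
    have hn : ∀ x, Nbhd C₁ x = Nbhd C₂ x := fun x => Finset.ext fun y => by
      have := Set.ext_iff.mp h (x, y)
      simpa [RelOf] using this
    ext A
    simp [Cov, hn]
  · intro h
    ext ⟨x, y⟩
    simp [RelOf, nbhd_eq_inf_cov, h]
end
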